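/- arXiv:math/0405078 — 2 statements merged into one kernel-verified Lean document; each statement's English description precedes it below -/
import Mathlib

section
/- Let M be a compact connected complex manifold. Then the natural map H^1(M, S^1) → H^1(M, O_M^*) induced by the inclusion of the locally constant sheaf S^1 (unit complex numbers) into O_M^* is injective. -/
open scoped Manifold
open Filter Topology

/-- Maximum modulus principle on a complex manifold: if `f` is holomorphic on an open set `U`,
`x ∈ U`, and `‖f‖` has a local maximum at `x`, then `f` is locally constant near `x`. -/
private lemma eventually_const_of_isLocalMax_norm
    {E : Type*} [NormedAddCommGroup E] [NormedSpace ℂ E]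
    {M : Type*} [TopologicalSpace M] [ChartedSpace E M]
    [IsManifold 𝓘(ℂ, E) (⊤ : ℕ∞) M]
    {U : Set M} (hU : IsOpen U) {f : M → ℂ}
    (hf : MDifferentiableOn 𝓘(ℂ, E) 𝓘(ℂ) f U) {x : M} (hx : x ∈ U)
    (hmax : ∀ᶠ y in 𝓝 x, ‖f y‖ ≤ ‖f x‖) :
    ∀ᶠ y in 𝓝 x, f y = f x := by
  set φ := extChartAt 𝓘(ℂ, E) x with hφ
  have hdiff : DifferentiableOn ℂ (f ∘ φ.symm) (φ.target ∩ φ.symm ⁻¹' U) := by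
    have := (mdifferentiableOn_iff.mp hf).2 x (f x)
    simpa [φ, chartAt_self_eq] using this
  have hWopen : IsOpen (φ.target ∩ φ.symm ⁻¹' U) :=
    (continuousOn_extChartAt_symm (I := 𝓘(ℂ, E)) x).isOpen_inter_preimage
      (isOpen_extChartAt_target (I := 𝓘(ℂ, E)) x) hU
  have hz₀mem : φ x ∈ φ.target ∩ φ.symm ⁻¹' U := by
    refine ⟨mem_extChartAt_target (I := 𝓘(ℂ, E)) x, ?_⟩
    simp only [Set.mem_preimage]
    rw [φ.left_inv (mem_extChartAt_source (I := 𝓘(ℂ, E)) x)]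
    exact hx
  have hd : ∀ᶠ z in 𝓝 (φ x), DifferentiableAt ℂ (f ∘ φ.symm) z := by
    filter_upwards [hWopen.mem_nhds hz₀mem] with z hz
    exact hdiff.differentiableAt (hWopen.mem_nhds hz)
  have hsymmx : φ.symm (φ x) = x := φ.left_inv (mem_extChartAt_source (I := 𝓘(ℂ, E)) x)
  have hc : IsLocalMax (norm ∘ (f ∘ φ.symm)) (φ x) := by
    have htend : Filter.Tendsto φ.symm (𝓝 (φ x)) (𝓝 x) := by
      have h2 := continuousAt_extChartAt_symm (I := 𝓘(ℂ, E)) x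
      rw [← hφ, ContinuousAt, hsymmx] at h2
      exact h2
    filter_upwards [htend.eventually hmax] with z hz
    simpa [Function.comp, hsymmx] using hz
  have heq := Complex.eventually_eq_of_isLocalMax_norm hd hc
  have htendφ : Filter.Tendsto φ (𝓝 x) (𝓝 (φ x)) :=
    continuousAt_extChartAt (I := 𝓘(ℂ, E)) x
  filter_upwards [htendφ.eventually heq,
    extChartAt_source_mem_nhds (I := 𝓘(ℂ, E)) x] with y h1 h2
  have : φ.symm (φ y) = y := φ.left_inv h2
  simpa [Function.comp, this, hsymmx] using h1

/-- the natural map `H¹(M,S¹) → H¹(M,O_M^*)` is injective for a compact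
connected complex manifold `M`.  Formalized at the level of Čech cocycles: if a cocycle
`t` with values in the locally constant sheaf `S¹` (i.e. locally constant of modulus `1`
on the overlaps of an open cover) becomes a coboundary in `O_M^*` (i.e. `t i j = f i / f j`
for nowhere-vanishing holomorphic `f i` on `U i`), then `t` is already a coboundary in
`S¹` (i.e. `t i j = c i / c j` for locally constant `c i` of modulus `1`). -/
theorem H1_S1_to_H1_Ostar_injective
    {E : Type*} [NormedAddCommGroup E] [NormedSpace ℂ E]
    {M : Type*} [TopologicalSpace M] [ChartedSpace E M]
    [IsManifold 𝓘(ℂ, E) (⊤ : ℕ∞) M]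
    [CompactSpace M] [ConnectedSpace M]
    {ι : Type*} (U : ι → Set M)
    (hUopen : ∀ i, IsOpen (U i)) (hUcover : ⋃ i, U i = Set.univ)
    (t : ι → ι → M → ℂ)
    (htmod : ∀ i j, ∀ x ∈ U i ∩ U j, ‖t i j x‖ = 1)
    (htlc : ∀ i j, ∀ x ∈ U i ∩ U j,
      ∀ᶠ y in nhdsWithin x (U i ∩ U j), t i j y = t i j x)
    (hcoc : ∀ i j k, ∀ x ∈ U i ∩ U j ∩ U k, t i j x * t j k x = t i k x)
    (f : ι → M → ℂ)
    (hfhol : ∀ i, MDifferentiableOn 𝓘(ℂ, E) 𝓘(ℂ) (f i) (U i))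
    (hf0 : ∀ i, ∀ x ∈ U i, f i x ≠ 0)
    (hcb : ∀ i j, ∀ x ∈ U i ∩ U j, t i j x = f i x / f j x) :
    ∃ c : ι → M → ℂ,
      (∀ i, ∀ x ∈ U i, ‖c i x‖ = 1) ∧
      (∀ i, ∀ x ∈ U i, ∀ᶠ y in nhdsWithin x (U i), c i y = c i x) ∧
      (∀ i j, ∀ x ∈ U i ∩ U j, t i j x = c i x / c j x) := by
  classical
  have hmem : ∀ x : M, ∃ i, x ∈ U i := fun x => by
    have : x ∈ ⋃ i, U i := hUcover ▸ Set.mem_univ x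
    simpa using this
  set idx : M → ι := fun x => (hmem x).choose with hidx
  have hidxmem : ∀ x, x ∈ U (idx x) := fun x => (hmem x).choose_spec
  -- moduli agree on overlaps
  have hnormeq : ∀ i j, ∀ x ∈ U i ∩ U j, ‖f i x‖ = ‖f j x‖ := by
    intro i j x hx
    have h1 := htmod i j x hx
    rw [hcb i j x hx, norm_div] at h1
    have hj : ‖f j x‖ ≠ 0 := norm_ne_zero_iff.mpr (hf0 j x hx.2)
    rw [div_eq_one_iff_eq hj] at h1
    exact h1
  set h : M → ℝ := fun x => ‖f (idx x) x‖ with hh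
  have hheq : ∀ i, ∀ x ∈ U i, h x = ‖f i x‖ := fun i x hx =>
    hnormeq _ i x ⟨hidxmem x, hx⟩
  have hcont : Continuous h := by
    rw [continuous_iff_continuousAt]
    intro x
    have hxi := hidxmem x
    have hfc : ContinuousAt (fun y => ‖f (idx x) y‖) x :=
      (((hfhol (idx x)).continuousOn x hxi).continuousAt
        ((hUopen (idx x)).mem_nhds hxi)).norm
    refine hfc.congr ?_
    filter_upwards [(hUopen (idx x)).mem_nhds hxi] with y hy
    exact (hheq (idx x) y hy).symm
  obtain ⟨z, -, hz⟩ := isCompact_univ.exists_isMaxOn Set.univ_nonempty hcont.continuousOn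
  have hzmax : ∀ y, h y ≤ h z := fun y => hz (Set.mem_univ y)
  -- the set where h attains its max is clopen, hence everything
  have hSopen : IsOpen {x : M | h x = h z} := by
    rw [isOpen_iff_mem_nhds]
    intro x hx
    obtain ⟨i, hxi⟩ := hmem x
    have hmax : ∀ᶠ y in 𝓝 x, ‖f i y‖ ≤ ‖f i x‖ := by
      filter_upwards [(hUopen i).mem_nhds hxi] with y hy
      rw [← hheq i y hy, ← hheq i x hxi]
      calc h y ≤ h z := hzmax y
        _ = h x := hx.symm
    have hev := eventually_const_of_isLocalMax_norm (hUopen i) (hfhol i) hxi hmax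
    filter_upwards [hev, (hUopen i).mem_nhds hxi] with y h1 h2
    show h y = h z
    rw [hheq i y h2, h1, ← hheq i x hxi]
    exact hx
  have hSuniv : {x : M | h x = h z} = Set.univ :=
    IsClopen.eq_univ ⟨isClosed_eq hcont continuous_const, hSopen⟩ ⟨z, rfl⟩
  have hhconst : ∀ x, h x = h z := fun x => by
    have : x ∈ {x : M | h x = h z} := hSuniv ▸ Set.mem_univ x
    exact this
  set r : ℝ := h z with hr
  have hrpos : 0 < r := by
    have : h z = ‖f (idx z) z‖ := rfl
    rw [hr, this]
    exact norm_pos_iff.mpr (hf0 (idx z) z (hidxmem z))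
  have hrC : (r : ℂ) ≠ 0 := by
    exact_mod_cast hrpos.ne'
  -- each f i is locally constant on U i
  have hflc : ∀ i, ∀ x ∈ U i, ∀ᶠ y in 𝓝 x, f i y = f i x := by
    intro i x hxi
    refine eventually_const_of_isLocalMax_norm (hUopen i) (hfhol i) hxi ?_
    filter_upwards [(hUopen i).mem_nhds hxi] with y hy
    rw [← hheq i y hy, ← hheq i x hxi, hhconst y, hhconst x]
  refine ⟨fun i x => f i x / r, ?_, ?_, ?_⟩
  · intro i x hxi
    rw [norm_div, Complex.norm_real, Real.norm_eq_abs, abs_of_pos hrpos,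
      ← hheq i x hxi, hhconst x]
    exact div_self hrpos.ne'
  · intro i x hxi
    filter_upwards [(hflc i x hxi).filter_mono nhdsWithin_le_nhds] with y hy
    rw [hy]
  · intro i j x hx
    rw [hcb i j x hx, div_div_div_cancel_right₀]
    exact hrC
end

section
/- On a compact Kähler manifold M, a holomorphic line bundle L is S^1-flat (lies in the image of H^1(M, S^1) → H^1(M, O_M^*)) if and only if its real Chern class c_ℝ(L) ∈ H^2(M, ℝ) vanishes. -/
/-- on a compact Kähler manifold a holomorphic line bundle is `S¹`-flat iff
its real Chern class vanishes.  Formalized as the underlying diagram chase: the rows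
`H¹(M,ℝ) →ρ H¹(M,S¹) →δ H²(M,ℤ) →ιR H²(M,ℝ)` (from `0 → ℤ → ℝ → S¹ → 0`) and
`H¹(M,O_M) →e H¹(M,O_M^*) →c H²(M,ℤ)` (from the exponential sequence) are exact,
the squares with the vertical maps `β : H¹(M,ℝ) → H¹(M,O_M)` and
`s : H¹(M,S¹) → H¹(M,O_M^*)` commute, and — this is the Hodge-theoretic input valid on a
compact Kähler manifold — `β` is surjective.  Then a line bundle `L ∈ H¹(M,O_M^*)` lies
in the image of `s` (is `S¹`-flat) iff its real Chern class `ιR (c L)` is zero. -/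
theorem s1flat_iff_real_chern_zero_of_beta_surjective
    {H1R H1S1 H1O H1Ostar H2Z H2Real : Type*}
    [AddCommGroup H1R] [AddCommGroup H1S1] [AddCommGroup H1O]
    [AddCommGroup H1Ostar] [AddCommGroup H2Z] [AddCommGroup H2Real]
    (ρ : H1R →+ H1S1) (δ : H1S1 →+ H2Z) (ιR : H2Z →+ H2Real)
    (β : H1R →+ H1O) (e : H1O →+ H1Ostar) (c : H1Ostar →+ H2Z)
    (s : H1S1 →+ H1Ostar)
    (hrow1a : Function.Exact ⇑ρ ⇑δ)
    (hrow1b : Function.Exact ⇑δ ⇑ιR)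
    (hrow2 : Function.Exact ⇑e ⇑c)
    (hsq1 : s.comp ρ = e.comp β)
    (hsq2 : c.comp s = δ)
    (hβ : Function.Surjective ⇑β)
    (L : H1Ostar) :
    (∃ θ : H1S1, s θ = L) ↔ ιR (c L) = 0 := by
  constructor
  · rintro ⟨θ, rfl⟩
    have hcs : c (s θ) = δ θ := congrFun (congrArg DFunLike.coe hsq2) θ
    rw [hcs]
    exact (hrow1b (δ θ)).2 ⟨θ, rfl⟩
  · intro h
    obtain ⟨θ, hθ⟩ := (hrow1b (c L)).1 h
    have hcs : c (L - s θ) = 0 := by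
      have : c (s θ) = δ θ := congrFun (congrArg DFunLike.coe hsq2) θ
      simp [map_sub, this, hθ]
    obtain ⟨x, hx⟩ := (hrow2 (L - s θ)).1 hcs
    obtain ⟨y, rfl⟩ := hβ x
    have hsq : s (ρ y) = e (β y) := congrFun (congrArg DFunLike.coe hsq1) y
    exact ⟨θ + ρ y, by rw [map_add, hsq, hx]; abel⟩
end
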